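/- arXiv:math/0304366 — 2 statements merged into one kernel-verified Lean document; each statement's English description precedes it below -/
import Mathlib

section
/- For the tied-down simple random walk model with δ-pinning, the variance is uniformly bounded: for every β > 0, sup_{n, x} Ê_{n,β}(φ_x²) < ∞, where Ê_{n,β} is expectation with respect to the measure P̂_{n,β}(φ) = (1/Ẑ_{n,β}) exp(β ∑_{x=1}^{2n−1} 1_{φ_x = 0}) P_n(φ). -/
open Filter Classical

/-- Position after `i` steps of the nearest-neighbor walk with step signs `s` (`true` = +1). -/
def walkPos (n : ℕ) (s : Fin n → Bool) (i : ℕ) : ℤ :=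
  ∑ j : Fin n, if (j : ℕ) < i then (if s j then (1 : ℤ) else -1) else 0

/-- The set of tied-down nearest-neighbor paths of length `2n` (encoded by their step signs):
`φ_0 = 0` and `φ_{2n} = 0`. -/
noncomputable def tiedPaths (n : ℕ) : Finset (Fin (2 * n) → Bool) :=
  Finset.univ.filter (fun s => walkPos (2 * n) s (2 * n) = 0)

/-- Number of pinned sites: `∑_{x=1}^{2n−1} 1_{φ_x = 0}`. -/
noncomputable def numZeros (n : ℕ) (s : Fin (2 * n) → Bool) : ℕ :=
  ((Finset.Icc 1 (2 * n - 1)).filter (fun x => walkPos (2 * n) s x = 0)).card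

/-- Expectation of `f` under the δ-pinned tied-down walk measure
`P̂_{n,β}(φ) ∝ exp(β ∑_{x=1}^{2n−1} 1_{φ_x=0}) P_n(φ)`. -/
noncomputable def pinnedExp (n : ℕ) (β : ℝ) (f : (Fin (2 * n) → Bool) → ℝ) : ℝ :=
  (∑ s ∈ tiedPaths n, Real.exp (β * numZeros n s) * f s) /
    (∑ s ∈ tiedPaths n, Real.exp (β * numZeros n s))

/-!
Let `Z(m)` be the pinned partition function: the sum of `exp (β · #zeros)` over bridges of
length `m`. Concatenation of bridges makes `Z` supermultiplicative. By Jensen's inequality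
`Z(2k) ≥ #bridges · exp (β · E[#zeros])`, and central binomial estimates give
`E[#zeros] ≥ √(k - 1) / 4` while `#bridges ≥ 4^k / (2√k)`; so `Z(2k) ≥ e · 4^k` for some `k`, and
supermultiplicativity upgrades this to `Z(2j) ≳ 4^j e^{j/k}` for all `j` (positive free energy).

If `φ_x ≠ 0`, then `x` lies strictly inside an excursion between consecutive zeros `a < x < b`.
Replacing that excursion by an arbitrary bridge `w` keeps all zeros and adds those of `w`, and the
pair (path, `w`) is recovered from the new path and the removed window. Hence
`Z(b - a) · P̂(excursion on [a, b]) ≤ 2^(b - a)`, i.e. that probability is `O(e^{-(b-a)/(2k)})`.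
Since `φ_x² ≤ (b - a)²` on that event, summing over `a` and `b` bounds `Ê(φ_x²)` uniformly.
-/

namespace PinnedWalk

open Finset Real

lemma sum_comp_le_sum_of_injOn {ι κ M : Type*} [AddCommMonoid M] [Preorder M] [AddLeftMono M]
    {s : Finset ι} {t : Finset κ} {f : κ → M} (g : ι → κ) (hg : Set.InjOn g s)
    (hmaps : ∀ i ∈ s, g i ∈ t) (hf : ∀ k ∈ t, 0 ≤ f k) :
    ∑ i ∈ s, f (g i) ≤ ∑ k ∈ t, f k := by
  classical
  rw [← sum_image hg]
  exact sum_le_sum_of_subset_of_nonneg (image_subset_iff.2 hmaps) fun k hk _ => hf k hk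

lemma sum_biUnion_le_sum_sum {ι α M : Type*} [DecidableEq α] [AddCommMonoid M] [Preorder M]
    [AddLeftMono M] {s : Finset ι} {t : ι → Finset α} {f : α → M} (hf : ∀ a, 0 ≤ f a) :
    ∑ a ∈ s.biUnion t, f a ≤ ∑ i ∈ s, ∑ a ∈ t i, f a := by
  classical
  induction s using Finset.induction_on with
  | empty => simp
  | insert i s hi ih =>
    rw [biUnion_insert, sum_insert hi]
    calc ∑ a ∈ t i ∪ s.biUnion t, f a
        ≤ ∑ a ∈ t i ∪ s.biUnion t, f a + ∑ a ∈ t i ∩ s.biUnion t, f a :=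
          le_add_of_nonneg_right (sum_nonneg fun a _ => hf a)
      _ = ∑ a ∈ t i, f a + ∑ a ∈ s.biUnion t, f a := sum_union_inter
      _ ≤ _ := by gcongr

variable {m : ℕ}

def walkStep (s : Fin m → Bool) (j : ℕ) : ℤ :=
  if h : j < m then (if s ⟨j, h⟩ then 1 else -1) else 0

lemma abs_walkStep_le (s : Fin m → Bool) (j : ℕ) : |walkStep s j| ≤ 1 := by
  unfold walkStep; split_ifs <;> simp

lemma walkPos_eq_sum_range (s : Fin m → Bool) (t : ℕ) :
    walkPos m s t = ∑ j ∈ range t, walkStep s j := by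
  have hstep : ∀ j : Fin m, (if s j then (1 : ℤ) else -1) = walkStep s j := fun j => by
    simp [walkStep]
  simp only [walkPos, hstep]
  rw [Fin.sum_univ_eq_sum_range (fun j => if j < t then walkStep s j else 0), ← sum_filter,
    ← sum_filter_of_ne (s := range t) (p := fun j => j < m)]
  · congr 1; ext j; simp only [mem_filter, mem_range]; tauto
  · intro j _ h; by_contra hj; exact h (by simp [walkStep, hj])

lemma walkPos_zero (s : Fin m → Bool) : walkPos m s 0 = 0 := by
  simp [walkPos_eq_sum_range]

lemma walkPos_add (s : Fin m → Bool) (a t : ℕ) :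
    walkPos m s (a + t) = walkPos m s a + ∑ j ∈ range t, walkStep s (a + j) := by
  simp only [walkPos_eq_sum_range, sum_range_add]

lemma walkPos_add_sub_congr {m' : ℕ} {s : Fin m → Bool} {s' : Fin m' → Bool} {a a' t : ℕ}
    (h : ∀ j < t, walkStep s (a + j) = walkStep s' (a' + j)) :
    walkPos m s (a + t) - walkPos m s a = walkPos m' s' (a' + t) - walkPos m' s' a' := by
  rw [walkPos_add, walkPos_add s', add_sub_cancel_left, add_sub_cancel_left]
  exact sum_congr rfl fun j hj => h j (mem_range.1 hj)

lemma walkPos_congr {m' : ℕ} {s : Fin m → Bool} {s' : Fin m' → Bool} {t : ℕ}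
    (h : ∀ j < t, walkStep s j = walkStep s' j) : walkPos m s t = walkPos m' s' t := by
  simpa [walkPos_zero] using
    walkPos_add_sub_congr (a := 0) (a' := 0) (s := s) (s' := s') (by simpa using h)

lemma walkPos_add_sub_eq {m' : ℕ} {s : Fin m → Bool} {s' : Fin m' → Bool} {a t : ℕ}
    (h : ∀ j < t, walkStep s (a + j) = walkStep s' j) :
    walkPos m s (a + t) - walkPos m s a = walkPos m' s' t := by
  simpa [walkPos_zero] using walkPos_add_sub_congr (a' := 0) (s' := s') (by simpa using h)

lemma abs_walkPos_add_sub_le (s : Fin m → Bool) (a t : ℕ) :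
    |walkPos m s (a + t) - walkPos m s a| ≤ t := by
  rw [walkPos_add, add_sub_cancel_left]
  calc |∑ j ∈ range t, walkStep s (a + j)| ≤ ∑ j ∈ range t, |walkStep s (a + j)| :=
        abs_sum_le_sum_abs _ _
    _ ≤ ∑ j ∈ range t, (1 : ℤ) := sum_le_sum fun j _ => abs_walkStep_le s _
    _ = t := by simp

def bridges (m : ℕ) : Finset (Fin m → Bool) :=
  univ.filter fun s => walkPos m s m = 0

def zeroSet (m : ℕ) (s : Fin m → Bool) : Finset ℕ :=
  (Icc 1 (m - 1)).filter fun t => walkPos m s t = 0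

noncomputable def partitionFn (β : ℝ) (m : ℕ) : ℝ :=
  ∑ s ∈ bridges m, exp (β * #(zeroSet m s))

lemma mem_bridges {s : Fin m → Bool} : s ∈ bridges m ↔ walkPos m s m = 0 := by
  simp [bridges]

lemma mem_zeroSet {s : Fin m → Bool} {t : ℕ} :
    t ∈ zeroSet m s ↔ 1 ≤ t ∧ t < m ∧ walkPos m s t = 0 := by
  simp only [zeroSet, mem_filter, mem_Icc]; omega

lemma partitionFn_nonneg (β : ℝ) (m : ℕ) : 0 ≤ partitionFn β m :=
  sum_nonneg fun _ _ => (exp_pos _).le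

lemma card_add_card_zeroSet_le {L a : ℕ} {s : Fin m → Bool} {w : Fin L → Bool}
    {A : Finset ℕ} (haL : a + L ≤ m) (hA : A ⊆ zeroSet m s)
    (hA_out : ∀ t ∈ A, t ≤ a ∨ a + L ≤ t) (hw : ∀ t ∈ zeroSet L w, walkPos m s (a + t) = 0) :
    #A + #(zeroSet L w) ≤ #(zeroSet m s) := by
  have hdisj : Disjoint A ((zeroSet L w).map (addLeftEmbedding a)) := by
    refine disjoint_left.2 fun t htA htw => ?_
    obtain ⟨u, hu, rfl⟩ := mem_map.1 htw
    obtain ⟨hu1, huL, -⟩ := mem_zeroSet.1 hu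
    have := hA_out _ htA
    rw [addLeftEmbedding_apply] at this
    omega
  rw [← (zeroSet L w).card_map (addLeftEmbedding a), ← card_union_of_disjoint hdisj]
  refine card_le_card (union_subset hA fun t ht => ?_)
  obtain ⟨u, hu, rfl⟩ := mem_map.1 ht
  obtain ⟨hu1, huL, -⟩ := mem_zeroSet.1 hu
  rw [addLeftEmbedding_apply]
  exact mem_zeroSet.2 ⟨by omega, by omega, hw u hu⟩

section Append

variable {c d : ℕ} (u : Fin c → Bool) (v : Fin d → Bool)

lemma walkStep_append_left {j : ℕ} (hj : j < c) :
    walkStep (Fin.append u v) j = walkStep u j := by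
  simp only [walkStep, dif_pos hj, dif_pos (show j < c + d by omega)]
  rw [show (⟨j, _⟩ : Fin (c + d)) = Fin.castAdd d ⟨j, hj⟩ from rfl, Fin.append_left]

lemma walkStep_append_right (j : ℕ) : walkStep (Fin.append u v) (c + j) = walkStep v j := by
  by_cases hj : j < d
  · simp only [walkStep, dif_pos hj, dif_pos (show c + j < c + d by omega)]
    rw [show (⟨c + j, _⟩ : Fin (c + d)) = Fin.natAdd c ⟨j, hj⟩ from rfl, Fin.append_right]
  · simp [walkStep, hj]

lemma walkPos_append_left {t : ℕ} (ht : t ≤ c) :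
    walkPos (c + d) (Fin.append u v) t = walkPos c u t :=
  walkPos_congr fun j hj => walkStep_append_left u v (by omega)

lemma walkPos_append_right (t : ℕ) :
    walkPos (c + d) (Fin.append u v) (c + t) = walkPos c u c + walkPos d v t := by
  have := walkPos_add_sub_eq (s := Fin.append u v) (t := t) fun j _ => walkStep_append_right u v j
  rw [walkPos_append_left u v le_rfl] at this
  omega

end Append

lemma append_mem_bridges {c d : ℕ} {u : Fin c → Bool} {v : Fin d → Bool}
    (hu : u ∈ bridges c) (hv : v ∈ bridges d) : Fin.append u v ∈ bridges (c + d) := by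
  rw [mem_bridges] at *
  rw [walkPos_append_right, hu, hv, add_zero]

lemma card_zeroSet_add_le_card_zeroSet_append {c d : ℕ} {u : Fin c → Bool} (v : Fin d → Bool)
    (hu : u ∈ bridges c) :
    #(zeroSet c u) + #(zeroSet d v) ≤ #(zeroSet (c + d) (Fin.append u v)) := by
  refine card_add_card_zeroSet_le le_rfl (fun t ht => ?_) (fun t ht => ?_) (fun t ht => ?_)
  · obtain ⟨ht1, htc, ht0⟩ := mem_zeroSet.1 ht
    exact mem_zeroSet.2 ⟨ht1, by omega, by rw [walkPos_append_left u v htc.le, ht0]⟩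
  · exact Or.inl (mem_zeroSet.1 ht).2.1.le
  · rw [walkPos_append_right, mem_bridges.1 hu, (mem_zeroSet.1 ht).2.2, add_zero]

lemma partitionFn_mul_le {β : ℝ} (hβ : 0 ≤ β) (c d : ℕ) :
    partitionFn β c * partitionFn β d ≤ partitionFn β (c + d) := by
  rw [partitionFn, partitionFn, sum_mul_sum, ← sum_product']
  calc ∑ p ∈ bridges c ×ˢ bridges d, exp (β * #(zeroSet c p.1)) * exp (β * #(zeroSet d p.2))
      ≤ ∑ p ∈ bridges c ×ˢ bridges d, exp (β * #(zeroSet (c + d) (Fin.append p.1 p.2))) := by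
        refine sum_le_sum fun p hp => ?_
        rw [← exp_add, ← mul_add, exp_le_exp]
        have := card_zeroSet_add_le_card_zeroSet_append p.2 (mem_product.1 hp).1
        gcongr
        exact_mod_cast this
    _ ≤ partitionFn β (c + d) :=
        sum_comp_le_sum_of_injOn (f := fun s => exp (β * #(zeroSet (c + d) s)))
          (Fin.appendEquiv c d) (Fin.appendEquiv c d).injective.injOn
          (fun p hp => append_mem_bridges (mem_product.1 hp).1 (mem_product.1 hp).2)
          (fun _ _ => (exp_pos _).le)

lemma card_filter_bridges_walkPos_eq_zero (c d : ℕ) :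
    #((bridges (c + d)).filter fun s => walkPos (c + d) s c = 0) =
      #(bridges c) * #(bridges d) := by
  rw [← card_product, ← card_map (Fin.appendEquiv c d).toEmbedding]
  congr 1
  ext s
  rw [mem_map_equiv, mem_filter, mem_product, mem_bridges, mem_bridges, mem_bridges]
  conv_lhs => rw [← Fin.append_castAdd_natAdd (f := s)]
  simp only [Fin.appendEquiv_symm_apply, walkPos_append_right, walkPos_append_left _ _ le_rfl]
  constructor
  · rintro ⟨h, hc⟩; exact ⟨hc, by simpa [hc] using h⟩
  · rintro ⟨hc, hd⟩; exact ⟨by simp [hc, hd], hc⟩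

lemma walkPos_self (s : Fin m → Bool) :
    walkPos m s m = 2 * #(univ.filter fun j => s j = true) - m := by
  have hsplit :=
    card_filter_add_card_filter_not (s := (univ : Finset (Fin m))) (fun j => s j = true)
  simp only [card_univ, Fintype.card_fin] at hsplit
  simp only [walkPos, Fin.is_lt, if_true, sum_ite, sum_const, nsmul_eq_mul, mul_one, mul_neg]
  omega

lemma mem_bridges_iff_two_mul_card {s : Fin m → Bool} :
    s ∈ bridges m ↔ 2 * #(univ.filter fun j => s j = true) = m := by
  rw [mem_bridges, walkPos_self]; omega

lemma card_bridges_two_mul (j : ℕ) : #(bridges (2 * j)) = Nat.centralBinom j := by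
  have hS : #(powersetCard j (univ : Finset (Fin (2 * j)))) = (2 * j).choose j := by simp
  rw [Nat.centralBinom_eq_two_mul_choose, ← hS]
  refine card_bij' (fun s _ => univ.filter fun i => s i = true) (fun S _ i => decide (i ∈ S))
    (fun s hs => ?_) (fun S hS => ?_) (fun s _ => by ext; simp) (fun S _ => by ext; simp)
  · rw [mem_powersetCard]
    exact ⟨subset_univ _, by rw [mem_bridges_iff_two_mul_card] at hs; omega⟩
  · rw [mem_powersetCard] at hS
    rw [mem_bridges_iff_two_mul_card]
    simp [hS.2]

lemma even_of_mem_bridges {s : Fin m → Bool} (hs : s ∈ bridges m) : Even m :=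
  ⟨_, (mem_bridges_iff_two_mul_card.1 hs).symm.trans (two_mul _)⟩

lemma partitionFn_zero (β : ℝ) : partitionFn β 0 = 1 := by
  simp [partitionFn, bridges, zeroSet, walkPos_zero]

lemma card_bridges_le_partitionFn {β : ℝ} (hβ : 0 ≤ β) (m : ℕ) :
    (#(bridges m) : ℝ) ≤ partitionFn β m := by
  rw [card_eq_sum_ones, Nat.cast_sum, Nat.cast_one]
  exact sum_le_sum fun s _ => one_le_exp (by positivity)

lemma partitionFn_two_mul_pos {β : ℝ} (hβ : 0 ≤ β) (j : ℕ) :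
    0 < partitionFn β (2 * j) := by
  refine lt_of_lt_of_le ?_ (card_bridges_le_partitionFn hβ _)
  exact_mod_cast card_bridges_two_mul j ▸ Nat.centralBinom_pos j

lemma sum_card_zeroSet (m : ℕ) :
    ∑ s ∈ bridges m, #(zeroSet m s) =
      ∑ t ∈ Icc 1 (m - 1), #((bridges m).filter fun s => walkPos m s t = 0) := by
  simp only [zeroSet, card_filter]
  exact sum_comm

lemma sum_centralBinom_mul_le_sum_card_zeroSet (k : ℕ) :
    ∑ j ∈ Icc 1 (k - 1), Nat.centralBinom j * Nat.centralBinom (k - j) ≤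
      ∑ s ∈ bridges (2 * k), #(zeroSet (2 * k) s) := by
  rw [sum_card_zeroSet]
  calc ∑ j ∈ Icc 1 (k - 1), Nat.centralBinom j * Nat.centralBinom (k - j)
      = ∑ j ∈ Icc 1 (k - 1),
          #((bridges (2 * k)).filter fun s => walkPos (2 * k) s (2 * j) = 0) := by
        refine sum_congr rfl fun j hj => ?_
        have h := card_filter_bridges_walkPos_eq_zero (2 * j) (2 * (k - j))
        rw [show 2 * j + 2 * (k - j) = 2 * k by simp at hj; omega] at h
        rw [h, card_bridges_two_mul, card_bridges_two_mul]
    _ = ∑ t ∈ (Icc 1 (k - 1)).image (2 * ·),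
          #((bridges (2 * k)).filter fun s => walkPos (2 * k) s t = 0) := by
        rw [sum_image fun _ _ _ _ h => by simpa using h]
    _ ≤ _ := sum_le_sum_of_subset_of_nonneg
        (fun t ht => by obtain ⟨j, hj, rfl⟩ := mem_image.1 ht; simp at hj ⊢; omega)
        (fun _ _ _ => Nat.zero_le _)

lemma four_pow_le_two_mul_sqrt_mul_centralBinom {j : ℕ} (hj : 1 ≤ j) :
    (4 : ℝ) ^ j ≤ 2 * √j * Nat.centralBinom j := by
  induction j, hj using Nat.le_induction with
  | base => norm_num [Nat.centralBinom, Nat.choose]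
  | succ j hj ih =>
    have hrec : ((j : ℝ) + 1) * Nat.centralBinom (j + 1) =
        2 * (2 * j + 1) * Nat.centralBinom j := by
      exact_mod_cast Nat.succ_mul_centralBinom_succ j
    have hsqrt : 2 * √j * (j + 1) ≤ √(j + 1) * (2 * j + 1) := by
      rw [← pow_le_pow_iff_left₀ (by positivity) (by positivity) two_ne_zero, mul_pow, mul_pow,
        mul_pow, sq_sqrt (by positivity), sq_sqrt (by positivity)]
      nlinarith
    have hstep : 4 * (2 * √j * Nat.centralBinom j) ≤
        2 * √(j + 1) * Nat.centralBinom (j + 1) := by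
      rw [← mul_le_mul_iff_of_pos_right (show (0 : ℝ) < j + 1 by positivity)]
      calc 4 * (2 * √j * Nat.centralBinom j) * (j + 1)
          = 4 * Nat.centralBinom j * (2 * √j * (j + 1)) := by ring
        _ ≤ 4 * Nat.centralBinom j * (√(j + 1) * (2 * j + 1)) := by gcongr
        _ = 2 * √(j + 1) * Nat.centralBinom (j + 1) * (j + 1) := by
            linear_combination (-2 * √(j + 1)) * hrec
    calc (4 : ℝ) ^ (j + 1) = 4 * 4 ^ j := by ring
      _ ≤ 4 * (2 * √j * Nat.centralBinom j) := by gcongr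
      _ ≤ _ := by push_cast; exact hstep

lemma centralBinom_mul_sqrt_le_four_pow (k : ℕ) :
    Nat.centralBinom k * √(3 * k + 1) ≤ (4 : ℝ) ^ k := by
  induction k with
  | zero => simp
  | succ k ih =>
    have hrec : ((k : ℝ) + 1) * Nat.centralBinom (k + 1) =
        2 * (2 * k + 1) * Nat.centralBinom k := by
      exact_mod_cast Nat.succ_mul_centralBinom_succ k
    have hsqrt : (2 * k + 1) * √(3 * k + 4) ≤ 2 * (k + 1) * √(3 * k + 1) := by
      rw [← pow_le_pow_iff_left₀ (by positivity) (by positivity) two_ne_zero, mul_pow, mul_pow,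
        sq_sqrt (by positivity), sq_sqrt (by positivity)]
      nlinarith
    have hstep : Nat.centralBinom (k + 1) * √(3 * k + 4) ≤
        4 * (Nat.centralBinom k * √(3 * k + 1)) := by
      rw [← mul_le_mul_iff_of_pos_right (show (0 : ℝ) < k + 1 by positivity)]
      calc Nat.centralBinom (k + 1) * √(3 * k + 4) * (k + 1)
          = 2 * Nat.centralBinom k * ((2 * k + 1) * √(3 * k + 4)) := by
            linear_combination √(3 * k + 4) * hrec
        _ ≤ 2 * Nat.centralBinom k * (2 * (k + 1) * √(3 * k + 1)) := by gcongr
        _ = _ := by ring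
    calc (Nat.centralBinom (k + 1) : ℝ) * √(3 * ((k + 1 : ℕ) : ℝ) + 1)
        = Nat.centralBinom (k + 1) * √(3 * k + 4) := by push_cast; ring_nf
      _ ≤ 4 * 4 ^ k := hstep.trans (by gcongr)
      _ = 4 ^ (k + 1) := by ring

lemma sqrt_le_sum_inv_sqrt (n : ℕ) : √n ≤ ∑ j ∈ Icc 1 n, 1 / √j := by
  rcases n.eq_zero_or_pos with rfl | hn
  · simp
  calc √n = ∑ j ∈ Icc 1 n, 1 / √n := by
        rw [sum_const, Nat.card_Icc, nsmul_eq_mul, add_tsub_cancel_right]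
        field_simp
        rw [sq_sqrt n.cast_nonneg]
    _ ≤ ∑ j ∈ Icc 1 n, 1 / √j := sum_le_sum fun j hj => by
        rw [mem_Icc] at hj
        gcongr
        · exact sqrt_pos.2 (by exact_mod_cast hj.1)
        · exact_mod_cast hj.2

lemma centralBinom_le_four_mul_sqrt_mul_centralBinom_mul {j k : ℕ} (hj : 1 ≤ j) (hjk : j < k) :
    (Nat.centralBinom k : ℝ) ≤ 4 * √j * (Nat.centralBinom j * Nat.centralBinom (k - j)) := by
  have hpos : 0 < √(3 * k + 1) := sqrt_pos.2 (by positivity)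
  have hkj : √(k - j : ℕ) ≤ √(3 * k + 1) := by
    gcongr; push_cast [hjk.le]; linarith [(j.cast_nonneg : (0 : ℝ) ≤ j)]
  rw [← mul_le_mul_iff_of_pos_right hpos]
  calc Nat.centralBinom k * √(3 * k + 1) ≤ (4 : ℝ) ^ j * 4 ^ (k - j) := by
        rw [← pow_add, Nat.add_sub_cancel' hjk.le]; exact centralBinom_mul_sqrt_le_four_pow k
    _ ≤ (2 * √j * Nat.centralBinom j) * (2 * √(k - j : ℕ) * Nat.centralBinom (k - j)) := by
        gcongr
        · exact four_pow_le_two_mul_sqrt_mul_centralBinom hj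
        · exact four_pow_le_two_mul_sqrt_mul_centralBinom (by omega)
    _ = 4 * √j * (Nat.centralBinom j * Nat.centralBinom (k - j)) * √(k - j : ℕ) := by ring
    _ ≤ _ := by gcongr

lemma centralBinom_mul_sqrt_le_sum_card_zeroSet (k : ℕ) :
    Nat.centralBinom k * (√(k - 1 : ℕ) / 4) ≤
      ∑ s ∈ bridges (2 * k), (#(zeroSet (2 * k) s) : ℝ) := by
  calc (Nat.centralBinom k : ℝ) * (√(k - 1 : ℕ) / 4)
      ≤ Nat.centralBinom k / 4 * ∑ j ∈ Icc 1 (k - 1), 1 / √j := by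
        rw [mul_div_assoc', div_mul_eq_mul_div]
        gcongr
        exact sqrt_le_sum_inv_sqrt _
    _ = ∑ j ∈ Icc 1 (k - 1), Nat.centralBinom k / (4 * √j) := by
        rw [mul_sum]; congr 1; ext j; field_simp
    _ ≤ ∑ j ∈ Icc 1 (k - 1), ((Nat.centralBinom j * Nat.centralBinom (k - j) : ℕ) : ℝ) := by
        refine sum_le_sum fun j hj => ?_
        rw [mem_Icc] at hj
        have : (0 : ℝ) < √j := sqrt_pos.2 (by exact_mod_cast hj.1)
        rw [div_le_iff₀' (by positivity)]
        exact_mod_cast centralBinom_le_four_mul_sqrt_mul_centralBinom_mul hj.1 (by omega)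
    _ ≤ _ := by exact_mod_cast sum_centralBinom_mul_le_sum_card_zeroSet k

lemma card_mul_exp_sum_div_card_le_sum_exp {ι : Type*} {s : Finset ι} (hs : s.Nonempty)
    (f : ι → ℝ) : #s * exp ((∑ i ∈ s, f i) / #s) ≤ ∑ i ∈ s, exp (f i) := by
  have hcard : (0 : ℝ) < #s := by exact_mod_cast hs.card_pos
  have h := convexOn_exp.map_sum_le (t := s) (w := fun _ => 1 / (#s : ℝ)) (p := f)
    (fun _ _ => by positivity) (by simp [hcard.ne']) (fun _ _ => Set.mem_univ _)
  simp only [smul_eq_mul, one_div_mul_eq_div, ← sum_div] at h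
  rwa [le_div_iff₀' hcard] at h

lemma four_pow_mul_exp_le_partitionFn {β : ℝ} (hβ : 0 ≤ β) {k : ℕ} (hk : 1 ≤ k) :
    (4 : ℝ) ^ k * exp (β * (√(k - 1 : ℕ) / 4)) ≤ 2 * √k * partitionFn β (2 * k) := by
  set B : ℝ := ((#(bridges (2 * k)) : ℕ) : ℝ) with hB_def
  set S : ℝ := ∑ s ∈ bridges (2 * k), (#(zeroSet (2 * k) s) : ℝ)
  have hB : B = Nat.centralBinom k := by rw [hB_def, card_bridges_two_mul]
  have hBpos : 0 < B := by rw [hB]; exact_mod_cast Nat.centralBinom_pos k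
  have havg : √(k - 1 : ℕ) / 4 ≤ S / B := by
    rw [le_div_iff₀' hBpos, hB]; exact centralBinom_mul_sqrt_le_sum_card_zeroSet k
  have hjensen : B * exp (β * (S / B)) ≤ partitionFn β (2 * k) := by
    have := card_mul_exp_sum_div_card_le_sum_exp (card_pos.1 (Nat.cast_pos.1 hBpos))
      fun s => β * #(zeroSet (2 * k) s)
    rwa [← mul_sum, mul_div_assoc] at this
  calc (4 : ℝ) ^ k * exp (β * (√(k - 1 : ℕ) / 4)) ≤ (2 * √k * B) * exp (β * (S / B)) := by
        refine mul_le_mul ?_ (exp_le_exp.2 (by gcongr)) (exp_pos _).le (by positivity)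
        rw [hB]; exact four_pow_le_two_mul_sqrt_mul_centralBinom hk
    _ ≤ 2 * √k * partitionFn β (2 * k) := by rw [mul_assoc]; gcongr

lemma exists_exp_one_mul_four_pow_le_partitionFn {β : ℝ} (hβ : 0 < β) :
    ∃ k : ℕ, 1 ≤ k ∧ exp 1 * 4 ^ k ≤ partitionFn β (2 * k) := by
  obtain ⟨N, hN⟩ := exists_nat_ge (max 1 (384 / β ^ 2))
  have hN1 : (1 : ℝ) ≤ N := le_of_max_le_left hN
  have hNβ : 384 ≤ β ^ 2 * N := by
    have := le_of_max_le_right hN; rwa [div_le_iff₀' (by positivity)] at this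
  -- `k = N² + 1` turns the exponent `β √(k - 1) / 4` below into `β N / 4`.
  refine ⟨N ^ 2 + 1, by omega, ?_⟩
  have key := four_pow_mul_exp_le_partitionFn hβ.le (k := N ^ 2 + 1) (by omega)
  rw [Nat.add_sub_cancel, Nat.cast_pow, sqrt_sq N.cast_nonneg] at key
  have hsqrt : √((N ^ 2 + 1 : ℕ) : ℝ) ≤ N + 1 := by
    rw [sqrt_le_left (by positivity)]; push_cast; nlinarith
  have hexp : 2 * √((N ^ 2 + 1 : ℕ) : ℝ) * exp 1 ≤ exp (β * (N / 4)) :=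
    calc 2 * √((N ^ 2 + 1 : ℕ) : ℝ) * exp 1 ≤ 2 * (N + 1) * 3 := by
          gcongr; exact exp_one_lt_d9.le.trans (by norm_num)
      _ ≤ (β * (N / 4)) ^ 2 / Nat.factorial 2 := by norm_num; nlinarith
      _ ≤ _ := Real.pow_div_factorial_le_exp _ (by positivity) 2
  refine le_of_mul_le_mul_left ?_ (by positivity : 0 < 2 * √((N ^ 2 + 1 : ℕ) : ℝ))
  calc 2 * √((N ^ 2 + 1 : ℕ) : ℝ) * (exp 1 * 4 ^ (N ^ 2 + 1))
      = 4 ^ (N ^ 2 + 1) * (2 * √((N ^ 2 + 1 : ℕ) : ℝ) * exp 1) := by ring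
    _ ≤ 4 ^ (N ^ 2 + 1) * exp (β * (N / 4)) := by gcongr
    _ ≤ _ := key

lemma partitionFn_pow_mul_le {β : ℝ} (hβ : 0 ≤ β) (c d q : ℕ) :
    partitionFn β c ^ q * partitionFn β d ≤ partitionFn β (c * q + d) := by
  induction q with
  | zero => simp
  | succ q ih =>
    calc partitionFn β c ^ (q + 1) * partitionFn β d
        = partitionFn β c * (partitionFn β c ^ q * partitionFn β d) := by ring
      _ ≤ partitionFn β c * partitionFn β (c * q + d) := by
        gcongr; exact partitionFn_nonneg β c
      _ ≤ partitionFn β (c * (q + 1) + d) := by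
        rw [show c * (q + 1) + d = c + (c * q + d) by ring]; exact partitionFn_mul_le hβ _ _

lemma four_pow_le_two_mul_sqrt_mul_partitionFn {β : ℝ} (hβ : 0 ≤ β) {k r : ℕ}
    (hk : 1 ≤ k) (hrk : r ≤ k) : (4 : ℝ) ^ r ≤ 2 * √k * partitionFn β (2 * r) := by
  have hsqrt : (1 : ℝ) ≤ √k := one_le_sqrt.2 (by exact_mod_cast hk)
  rcases r.eq_zero_or_pos with rfl | hr
  · rw [pow_zero, mul_zero, partitionFn_zero]; linarith
  calc (4 : ℝ) ^ r ≤ 2 * √r * Nat.centralBinom r :=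
        four_pow_le_two_mul_sqrt_mul_centralBinom hr
    _ ≤ 2 * √k * partitionFn β (2 * r) := by
      rw [← card_bridges_two_mul]
      gcongr
      exact card_bridges_le_partitionFn hβ _

/-- Writing `j = k q + r`, each of the `q` blocks of length `2k` gains a factor `e` over `4 ^ k`. -/
lemma four_pow_le_mul_exp_neg_mul_partitionFn {β : ℝ} (hβ : 0 ≤ β) {k : ℕ} (hk : 1 ≤ k)
    (hgood : exp 1 * 4 ^ k ≤ partitionFn β (2 * k)) (j : ℕ) :
    (4 : ℝ) ^ j ≤ 2 * √k * exp 1 * exp (-(j / k)) * partitionFn β (2 * j) := by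
  obtain ⟨q, r, hrk, rfl⟩ : ∃ q r, r < k ∧ j = k * q + r :=
    ⟨j / k, j % k, Nat.mod_lt j hk, (Nat.div_add_mod j k).symm⟩
  have hq : ((k * q + r : ℕ) : ℝ) / k ≤ q + 1 := by
    rw [div_le_iff₀ (by positivity)]; push_cast
    nlinarith [(show (r : ℝ) < k by exact_mod_cast hrk)]
  have hblocks : exp q * 4 ^ (k * q + r) ≤ 2 * √k * partitionFn β (2 * (k * q + r)) :=
    calc exp q * 4 ^ (k * q + r) = (exp 1 * 4 ^ k) ^ q * 4 ^ r := by
          rw [← exp_one_pow, pow_add, pow_mul]; ring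
      _ ≤ partitionFn β (2 * k) ^ q * (2 * √k * partitionFn β (2 * r)) := by
          gcongr
          · exact pow_nonneg (partitionFn_nonneg β _) q
          · exact four_pow_le_two_mul_sqrt_mul_partitionFn hβ hk hrk.le
      _ ≤ 2 * √k * partitionFn β (2 * (k * q + r)) := by
          rw [mul_left_comm, show 2 * (k * q + r) = 2 * k * q + 2 * r by ring]
          gcongr; exact partitionFn_pow_mul_le hβ _ _ _
  calc (4 : ℝ) ^ (k * q + r) = exp (-q) * (exp q * 4 ^ (k * q + r)) := by
        rw [← mul_assoc, ← exp_add, neg_add_cancel, exp_zero, one_mul]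
    _ ≤ exp 1 * exp (-((k * q + r : ℕ) / k)) * (2 * √k * partitionFn β (2 * (k * q + r))) := by
        gcongr
        rw [← exp_add, exp_le_exp]; linarith
    _ = _ := by ring

section Splice

variable {L : ℕ}

def splice (s : Fin m → Bool) (a : ℕ) (w : Fin L → Bool) : Fin m → Bool :=
  fun i => if h : a ≤ i ∧ (i : ℕ) < a + L then w ⟨i - a, by omega⟩ else s i

def window (a : ℕ) (h : a + L ≤ m) (s : Fin m → Bool) : Fin L → Bool :=
  fun i => s ⟨a + i, by omega⟩

variable {a : ℕ} (s : Fin m → Bool) (w : Fin L → Bool)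

lemma walkStep_splice_of_not_mem {j : ℕ} (hj : j < a ∨ a + L ≤ j) :
    walkStep (splice s a w) j = walkStep s j := by
  have hout : ¬(a ≤ j ∧ j < a + L) := by omega
  simp [walkStep, splice, hout]

lemma walkStep_splice_add (haL : a + L ≤ m) {j : ℕ} (hj : j < L) :
    walkStep (splice s a w) (a + j) = walkStep w j := by
  simp [walkStep, splice, hj, show a + j < m by omega]

lemma walkPos_splice_of_le {t : ℕ} (ht : t ≤ a) :
    walkPos m (splice s a w) t = walkPos m s t :=
  walkPos_congr fun j hj => walkStep_splice_of_not_mem s w (by omega)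

lemma walkPos_splice_add (haL : a + L ≤ m) {t : ℕ} (ht : t ≤ L) :
    walkPos m (splice s a w) (a + t) = walkPos m s a + walkPos L w t := by
  have := walkPos_add_sub_eq (s := splice s a w) (t := t) fun j hj =>
    walkStep_splice_add s w haL (by omega)
  rw [walkPos_splice_of_le s w le_rfl] at this
  omega

lemma walkPos_splice_of_not_mem (haL : a + L ≤ m) (hw : w ∈ bridges L)
    (hs : walkPos m s (a + L) = walkPos m s a) {t : ℕ} (ht : t ≤ a ∨ a + L ≤ t) :
    walkPos m (splice s a w) t = walkPos m s t := by
  rcases ht with ht | ht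
  · exact walkPos_splice_of_le s w ht
  obtain ⟨d, rfl⟩ := Nat.exists_eq_add_of_le ht
  have := walkPos_add_sub_congr (a := a + L) (a' := a + L) (t := d) (s := splice s a w)
    (s' := s) fun j _ => walkStep_splice_of_not_mem s w (by omega)
  rw [walkPos_splice_add s w haL le_rfl, mem_bridges.1 hw, add_zero, hs] at this
  omega

lemma window_splice (haL : a + L ≤ m) : window a haL (splice s a w) = w := by
  ext i
  simp [window, splice]

lemma splice_splice_window (haL : a + L ≤ m) :
    splice (splice s a w) a (window a haL s) = s := by
  ext i
  unfold splice window
  split_ifs with h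
  · exact congrArg s (Fin.ext (by simp only; omega))
  · rfl

end Splice

noncomputable def excursions (m a b : ℕ) : Finset (Fin m → Bool) :=
  (bridges m).filter fun s =>
    walkPos m s a = 0 ∧ walkPos m s b = 0 ∧ ∀ t, a < t → t < b → walkPos m s t ≠ 0

lemma mem_excursions {a b : ℕ} {s : Fin m → Bool} :
    s ∈ excursions m a b ↔ s ∈ bridges m ∧ walkPos m s a = 0 ∧ walkPos m s b = 0 ∧
      ∀ t, a < t → t < b → walkPos m s t ≠ 0 :=
  mem_filter

section Excursion

variable {a L : ℕ} {s : Fin m → Bool} {w : Fin L → Bool}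

lemma window_mem_bridges (haL : a + L ≤ m) (hs : s ∈ excursions m a (a + L)) :
    window a haL s ∈ bridges L := by
  obtain ⟨-, ha, hb, -⟩ := mem_excursions.1 hs
  have := walkPos_add_sub_eq (s := s) (s' := window a haL s) (a := a) (t := L) fun j hj => by
    simp only [walkStep, window, dif_pos hj, dif_pos (show a + j < m by omega)]; rfl
  rw [ha, hb, sub_zero] at this
  exact mem_bridges.2 this.symm

lemma splice_mem_bridges (haL : a + L ≤ m) (hs : s ∈ excursions m a (a + L))
    (hw : w ∈ bridges L) : splice s a w ∈ bridges m := by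
  obtain ⟨hsm, ha, hb, -⟩ := mem_excursions.1 hs
  rw [mem_bridges, walkPos_splice_of_not_mem s w haL hw (hb.trans ha.symm) (Or.inr haL)]
  exact mem_bridges.1 hsm

lemma card_zeroSet_add_le_card_zeroSet_splice (haL : a + L ≤ m)
    (hs : s ∈ excursions m a (a + L)) (hw : w ∈ bridges L) :
    #(zeroSet m s) + #(zeroSet L w) ≤ #(zeroSet m (splice s a w)) := by
  obtain ⟨-, ha, hb, hexc⟩ := mem_excursions.1 hs
  have hout : ∀ t ∈ zeroSet m s, t ≤ a ∨ a + L ≤ t := fun t ht => by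
    by_contra h
    exact hexc t (by omega) (by omega) (mem_zeroSet.1 ht).2.2
  refine card_add_card_zeroSet_le haL (fun t ht => ?_) hout (fun t ht => ?_)
  · obtain ⟨ht1, htm, ht0⟩ := mem_zeroSet.1 ht
    refine mem_zeroSet.2 ⟨ht1, htm, ?_⟩
    rw [walkPos_splice_of_not_mem s w haL hw (hb.trans ha.symm) (hout t ht), ht0]
  · obtain ⟨-, htL, ht0⟩ := mem_zeroSet.1 ht
    rw [walkPos_splice_add s w haL htL.le, ha, ht0, add_zero]

end Excursion

/-- `(w, s) ↦ (splice s a w, window a haL s)` is injective, since `splice` and `window` undo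
each other; its image lies in `bridges m × (all words of length L)`. -/
lemma partitionFn_mul_sum_excursions_le {β : ℝ} (hβ : 0 ≤ β) {a L : ℕ} (haL : a + L ≤ m) :
    partitionFn β L * ∑ s ∈ excursions m a (a + L), exp (β * #(zeroSet m s)) ≤
      2 ^ L * partitionFn β m := by
  rw [partitionFn, sum_mul_sum, ← sum_product']
  calc ∑ p ∈ bridges L ×ˢ excursions m a (a + L),
        exp (β * #(zeroSet L p.1)) * exp (β * #(zeroSet m p.2))
      ≤ ∑ p ∈ bridges L ×ˢ excursions m a (a + L),
          exp (β * #(zeroSet m (splice p.2 a p.1))) := by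
        refine sum_le_sum fun p hp => ?_
        obtain ⟨hw, hs⟩ := mem_product.1 hp
        rw [← exp_add, ← mul_add, exp_le_exp]
        have := card_zeroSet_add_le_card_zeroSet_splice haL hs hw
        gcongr
        exact_mod_cast (add_comm _ _).trans_le this
    _ ≤ ∑ q ∈ bridges m ×ˢ (univ : Finset (Fin L → Bool)), exp (β * #(zeroSet m q.1)) := by
        refine sum_comp_le_sum_of_injOn (s := bridges L ×ˢ excursions m a (a + L))
          (t := bridges m ×ˢ univ) (f := fun q => exp (β * #(zeroSet m q.1)))
          (fun p : (Fin L → Bool) × (Fin m → Bool) => (splice p.2 a p.1, window a haL p.2))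
          (fun p _ q _ h => ?_) (fun p hp => ?_) (fun _ _ => (exp_pos _).le)
        · obtain ⟨h1, h2⟩ := Prod.mk.inj h
          refine Prod.ext ?_ ?_
          · rw [← window_splice p.2 p.1 haL, ← window_splice q.2 q.1 haL, h1]
          · rw [← splice_splice_window p.2 p.1 haL, ← splice_splice_window q.2 q.1 haL, h1, h2]
        · obtain ⟨hw, hs⟩ := mem_product.1 hp
          exact mem_product.2 ⟨splice_mem_bridges haL hs hw, mem_univ _⟩
    _ = 2 ^ L * partitionFn β m := by
        rw [sum_product, partitionFn, mul_sum]
        simp [card_univ]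

lemma sum_excursions_le {β : ℝ} (hβ : 0 ≤ β) {k : ℕ} (hk : 1 ≤ k)
    (hgood : exp 1 * 4 ^ k ≤ partitionFn β (2 * k)) {a L : ℕ} (haL : a + L ≤ m) :
    ∑ s ∈ excursions m a (a + L), exp (β * #(zeroSet m s)) ≤
      2 * √k * exp 1 * exp (-(L / (2 * k))) * partitionFn β m := by
  rcases (excursions m a (a + L)).eq_empty_or_nonempty with hE | ⟨s, hs⟩
  · rw [hE, sum_empty]; exact mul_nonneg (by positivity) (partitionFn_nonneg β m)
  obtain ⟨j, rfl⟩ : Even L := even_of_mem_bridges (window_mem_bridges haL hs)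
  rw [← two_mul] at haL ⊢
  refine le_of_mul_le_mul_left ?_ (partitionFn_two_mul_pos hβ j)
  calc partitionFn β (2 * j) * ∑ s ∈ excursions m a (a + 2 * j), exp (β * #(zeroSet m s))
      ≤ 4 ^ j * partitionFn β m := by
        simpa [pow_mul, show (2 : ℝ) ^ 2 = 4 by norm_num] using
          partitionFn_mul_sum_excursions_le hβ haL
    _ ≤ (2 * √k * exp 1 * exp (-(j / k)) * partitionFn β (2 * j)) * partitionFn β m := by
        gcongr
        · exact partitionFn_nonneg β m
        · exact four_pow_le_mul_exp_neg_mul_partitionFn hβ hk hgood j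
    _ = _ := by
        rw [show ((2 * j : ℕ) : ℝ) / (2 * k) = j / k by push_cast; field_simp]; ring

lemma sq_walkPos_le_of_mem_excursions {a b x : ℕ} {s : Fin m → Bool}
    (hs : s ∈ excursions m a b) (hax : a ≤ x) (hxb : x ≤ b) :
    ((walkPos m s x : ℝ)) ^ 2 ≤ ((b - a : ℕ) : ℝ) ^ 2 := by
  obtain ⟨-, ha, -, -⟩ := mem_excursions.1 hs
  have h := abs_walkPos_add_sub_le s a (x - a)
  rw [Nat.add_sub_cancel' hax, ha, sub_zero] at h
  rw [← sq_abs, ← Int.cast_abs]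
  gcongr
  exact_mod_cast h.trans (by omega)

lemma sq_mul_exp_neg_le {c x : ℝ} (hc : 0 < c) (hx : 0 ≤ x) :
    x ^ 2 * exp (-(c * x)) ≤ 8 / c ^ 2 * exp (-(c * x / 2)) := by
  have h := Real.pow_div_factorial_le_exp _ (show 0 ≤ c * x / 2 by positivity) 2
  have hsplit : exp (-(c * x)) = exp (-(c * x / 2)) / exp (c * x / 2) := by
    rw [← exp_sub]; ring_nf
  rw [hsplit, mul_div_assoc', div_le_iff₀ (exp_pos _)]
  calc x ^ 2 * exp (-(c * x / 2))
      = 8 / c ^ 2 * ((c * x / 2) ^ 2 / Nat.factorial 2) * exp (-(c * x / 2)) := by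
        field_simp; norm_num; ring
    _ ≤ _ := by rw [mul_right_comm]; gcongr

lemma exists_mem_excursions {s : Fin m → Bool} (hs : s ∈ bridges m) {x : ℕ} (hxm : x ≤ m)
    (hsx : walkPos m s x ≠ 0) : ∃ a b, a < x ∧ x < b ∧ b ≤ m ∧ s ∈ excursions m a b := by
  have hxm' : x < m := lt_of_le_of_ne hxm (by rintro rfl; exact hsx (mem_bridges.1 hs))
  have hnext : ∃ b, x < b ∧ walkPos m s b = 0 := ⟨m, hxm', mem_bridges.1 hs⟩
  set a := Nat.findGreatest (fun t => walkPos m s t = 0) x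
  set b := Nat.find hnext
  have ha0 : walkPos m s a = 0 :=
    Nat.findGreatest_spec (P := fun t => walkPos m s t = 0) (Nat.zero_le x) (walkPos_zero s)
  have hax : a < x := lt_of_le_of_ne (Nat.findGreatest_le x) (by rintro h; exact hsx (h ▸ ha0))
  obtain ⟨hxb, hb0⟩ := Nat.find_spec hnext
  refine ⟨a, b, hax, hxb, Nat.find_min' hnext ⟨hxm', mem_bridges.1 hs⟩, ?_⟩
  refine mem_excursions.2 ⟨hs, ha0, hb0, fun t hat htb ht0 => ?_⟩
  rcases le_or_gt t x with htx | hxt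
  · exact Nat.findGreatest_is_greatest hat htx ht0
  · exact Nat.find_min hnext htb ⟨hxt, ht0⟩

lemma sum_exp_mul_sq_walkPos_excursions_le {β : ℝ} (hβ : 0 ≤ β) {k : ℕ} (hk : 1 ≤ k)
    (hgood : exp 1 * 4 ^ k ≤ partitionFn β (2 * k)) {a b x : ℕ} (hax : a ≤ x) (hxb : x ≤ b)
    (hbm : b ≤ m) :
    ∑ s ∈ excursions m a b, exp (β * #(zeroSet m s)) * (walkPos m s x : ℝ) ^ 2 ≤
      64 * k ^ 2 * √k * exp 1 * exp (-(1 / (4 * k))) ^ (b - a) * partitionFn β m := by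
  obtain ⟨L, rfl⟩ := Nat.exists_eq_add_of_le (hax.trans hxb)
  have hk0 : (0 : ℝ) < 2 * k := by positivity
  calc ∑ s ∈ excursions m a (a + L), exp (β * #(zeroSet m s)) * (walkPos m s x : ℝ) ^ 2
      ≤ ∑ s ∈ excursions m a (a + L), exp (β * #(zeroSet m s)) * (L : ℝ) ^ 2 :=
        sum_le_sum fun s hs => mul_le_mul_of_nonneg_left
          (by simpa using sq_walkPos_le_of_mem_excursions hs hax hxb) (exp_pos _).le
    _ ≤ 2 * √k * exp 1 * ((L : ℝ) ^ 2 * exp (-(1 / (2 * k) * L))) * partitionFn β m := by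
        rw [← sum_mul, mul_comm]
        refine (mul_le_mul_of_nonneg_left (sum_excursions_le hβ hk hgood hbm)
          (by positivity)).trans_eq ?_
        rw [one_div_mul_eq_div]; ring
    _ ≤ 2 * √k * exp 1 * (8 / (1 / (2 * k)) ^ 2 * exp (-(1 / (2 * k) * L / 2))) *
          partitionFn β m :=
        mul_le_mul_of_nonneg_right (mul_le_mul_of_nonneg_left
          (sq_mul_exp_neg_le (one_div_pos.2 hk0) L.cast_nonneg) (by positivity))
          (partitionFn_nonneg β m)
    _ = _ := by
        rw [Nat.add_sub_cancel_left, ← exp_nat_mul]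
        field_simp
        ring_nf

lemma sum_bridges_le_sum_sum_excursions {f : (Fin m → Bool) → ℝ} (hf : ∀ s, 0 ≤ f s) {x : ℕ}
    (hxm : x ≤ m) (hfx : ∀ s, walkPos m s x = 0 → f s = 0) :
    ∑ s ∈ bridges m, f s ≤
      ∑ p ∈ range x ×ˢ range (m - x),
        ∑ s ∈ excursions m (x - (p.1 + 1)) (x + (p.2 + 1)), f s := by
  have hcover : (bridges m).filter (fun s => walkPos m s x ≠ 0) ⊆
      (range x ×ˢ range (m - x)).biUnion fun p =>
        excursions m (x - (p.1 + 1)) (x + (p.2 + 1)) := fun s hs => by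
    obtain ⟨hs, hsx⟩ := mem_filter.1 hs
    obtain ⟨a, b, hax, hxb, hbm, hab⟩ := exists_mem_excursions hs hxm hsx
    refine mem_biUnion.2 ⟨(x - 1 - a, b - x - 1), by simp; omega, ?_⟩
    rwa [show x - (x - 1 - a + 1) = a by omega, show x + (b - x - 1 + 1) = b by omega]
  rw [← sum_filter_of_ne (p := fun s => walkPos m s x ≠ 0) fun s _ h hx => h (hfx s hx)]
  exact (sum_le_sum_of_subset_of_nonneg hcover fun s _ _ => hf s).trans
    (sum_biUnion_le_sum_sum hf)

lemma sum_exp_mul_sq_walkPos_le {β : ℝ} (hβ : 0 ≤ β) {k : ℕ} (hk : 1 ≤ k)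
    (hgood : exp 1 * 4 ^ k ≤ partitionFn β (2 * k)) {x : ℕ} (hxm : x ≤ m) :
    ∑ s ∈ bridges m, exp (β * #(zeroSet m s)) * (walkPos m s x : ℝ) ^ 2 ≤
      64 * k ^ 2 * √k * exp 1 / (1 - exp (-(1 / (4 * k)))) ^ 2 * partitionFn β m := by
  set r := exp (-(1 / (4 * k)))
  set D := 64 * k ^ 2 * √k * exp 1 * partitionFn β m
  have hr1 : r < 1 := exp_lt_one_iff.2 (by simp only [neg_lt_zero, one_div_pos]; positivity)
  have hD : 0 ≤ D := mul_nonneg (by positivity) (partitionFn_nonneg β m)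
  have hgeom : ∀ n, ∑ i ∈ range n, r ^ i ≤ 1 / (1 - r) := fun n => by
    have := geom_sum_Ico_le_of_lt_one (exp_pos _).le hr1 (m := 0) (n := n)
    rwa [← range_eq_Ico, pow_zero] at this
  calc ∑ s ∈ bridges m, exp (β * #(zeroSet m s)) * (walkPos m s x : ℝ) ^ 2
      ≤ ∑ p ∈ range x ×ˢ range (m - x), ∑ s ∈ excursions m (x - (p.1 + 1)) (x + (p.2 + 1)),
          exp (β * #(zeroSet m s)) * (walkPos m s x : ℝ) ^ 2 :=
        sum_bridges_le_sum_sum_excursions (fun s => by positivity) hxm fun s h => by simp [h]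
    _ ≤ ∑ p ∈ range x ×ˢ range (m - x), D * (r ^ p.1 * r ^ p.2) := by
        refine sum_le_sum fun p hp => ?_
        obtain ⟨hi, hj⟩ := mem_product.1 hp
        simp only [mem_range] at hi hj
        refine (sum_exp_mul_sq_walkPos_excursions_le hβ hk hgood (by omega) (by omega)
          (by omega)).trans ?_
        rw [mul_right_comm, ← pow_add]
        exact mul_le_mul_of_nonneg_left
          (pow_le_pow_of_le_one (exp_pos _).le hr1.le (by omega)) hD
    _ = D * ((∑ i ∈ range x, r ^ i) * ∑ j ∈ range (m - x), r ^ j) := by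
        rw [sum_mul_sum, ← sum_product', mul_sum]
    _ ≤ D * (1 / (1 - r) * (1 / (1 - r))) := by
        gcongr
        · exact hgeom x
        · exact hgeom (m - x)
    _ = _ := by simp only [D]; field_simp

end PinnedWalk

open PinnedWalk

/-- for every `β > 0` the δ-pinning strongly localizes the tied-down simple
random walk: `sup_{n,x} Ê_{n,β}(φ_x²) < ∞`. -/
theorem stmt9 (β : ℝ) (hβ : 0 < β) :
    ∃ C : ℝ, ∀ n : ℕ, 1 ≤ n → ∀ x : ℕ, x ≤ 2 * n →
      pinnedExp n β (fun s => ((walkPos (2 * n) s x : ℝ)) ^ 2) ≤ C := by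
  obtain ⟨k, hk, hgood⟩ := exists_exp_one_mul_four_pow_le_partitionFn hβ
  refine ⟨64 * k ^ 2 * √k * Real.exp 1 / (1 - Real.exp (-(1 / (4 * k)))) ^ 2,
    fun n _ x hx => ?_⟩
  change (∑ s ∈ bridges (2 * n), _) / partitionFn β (2 * n) ≤ _
  rw [div_le_iff₀ (partitionFn_two_mul_pos hβ.le n)]
  exact sum_exp_mul_sq_walkPos_le hβ.le hk hgood hx
end

section
/- For the tied-down simple random walk of length 2n with δ-pinning of strength β > 0, the partition function Ẑ_{n,β} = E_n[exp(β ∑_{x=1}^{2n−1} 1_{φ_x=0})] grows exponentially: liminf_{n→∞} (1/n) log Ẑ_{n,β} > 0 for every β > 0. -/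
open Filter Classical

/-- Pinned partition function `Ẑ_{n,β} = E_n[exp(β ∑_{x=1}^{2n−1} 1_{φ_x=0})]`, where
`E_n` is the uniform average over tied-down paths of length `2n`. -/
noncomputable def pinnedZ (n : ℕ) (β : ℝ) : ℝ :=
  (∑ s ∈ tiedPaths n, Real.exp (β * numZeros n s)) / (tiedPaths n).card

/-! Let `Z_t(y)` be the sum over walks of length `t` from `0` to `y` of `∏_{x=1}^t w(φ_x)`, where
`w(0) = e^β` and `w = 1` elsewhere; then `Z_{2n}(0) = e^β · #(tied paths) · Ẑ_{n,β} ≤ e^β 4^n Ẑ_{n,β}`.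
These sums obey the transfer recursion `Z_{t+1}(y) = w(y) (Z_t(y-1) + Z_t(y+1))`, so a nonnegative
compactly supported `f` with `μ f(y) ≤ w(y) (f(y-1) + f(y+1))` forces `Z_{2n}(0) ≳ μ^{2n}`, and it
suffices to find one with `μ > 2`. Away from `0`, `r^|y|` is an eigenfunction of the free operator
with eigenvalue `r + 1/r > 2`, and for `r` close enough to `1` the reward `e^β` at `0` pays for the
kink there; cutting off by the tent `(L - |y|)₊` loses only a factor `(L - 1)/L`. -/

open Finset Real

lemma walkPos_snoc_of_le {t x : ℕ} (s : Fin t → Bool) (b : Bool) (hx : x ≤ t) :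
    walkPos (t + 1) (Fin.snoc s b) x = walkPos t s x := by
  simp only [walkPos, Fin.sum_univ_castSucc, Fin.val_castSucc, Fin.snoc_castSucc, Fin.val_last,
    Fin.snoc_last, add_eq_left, ite_eq_right_iff]
  omega

lemma walkPos_snoc_succ {t : ℕ} (s : Fin t → Bool) (b : Bool) :
    walkPos (t + 1) (Fin.snoc s b) (t + 1) = walkPos t s t + if b then 1 else -1 := by
  simp [walkPos, Fin.sum_univ_castSucc]

section PathPartition

variable (w : ℤ → ℝ)

noncomputable def pathZ (t : ℕ) (y : ℤ) : ℝ :=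
  ∑ s : Fin t → Bool, if walkPos t s t = y then ∏ x ∈ Icc 1 t, w (walkPos t s x) else 0

lemma pathZ_zero (y : ℤ) : pathZ w 0 y = if y = 0 then 1 else 0 := by
  simp [pathZ, walkPos, @eq_comm ℤ 0]

lemma pathZ_succ (t : ℕ) (y : ℤ) :
    pathZ w (t + 1) y = w y * (pathZ w t (y - 1) + pathZ w t (y + 1)) := by
  have step : ∀ (s : Fin t → Bool) (b : Bool),
      (if walkPos (t + 1) (Fin.snoc s b) (t + 1) = y then
          ∏ x ∈ Icc 1 (t + 1), w (walkPos (t + 1) (Fin.snoc s b) x) else 0) =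
        w y * if walkPos t s t = y - (if b then 1 else -1) then
          ∏ x ∈ Icc 1 t, w (walkPos t s x) else 0 := by
    intro s b
    rw [prod_Icc_succ_top (by omega), walkPos_snoc_succ,
      prod_congr rfl fun x hx => by rw [walkPos_snoc_of_le s b (mem_Icc.1 hx).2]]
    by_cases h : walkPos t s t = y - (if b then 1 else -1)
    · rw [if_pos (by omega), if_pos h, show walkPos t s t + (if b then 1 else -1) = y by omega]
      ring
    · rw [if_neg (by omega), if_neg h, mul_zero]
  have snoc_eq : ∀ b (s : Fin t → Bool), (Fin.snocEquiv fun _ => Bool) (b, s) = Fin.snoc s b :=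
    fun _ _ => rfl
  rw [pathZ, ← (Fin.snocEquiv fun _ => Bool).sum_comp, Fintype.sum_prod_type, Fintype.sum_bool]
  simp only [snoc_eq, step, ← mul_sum, ← mul_add]
  simp only [if_true, Bool.false_eq_true, if_false, sub_neg_eq_add, pathZ, add_comm]

lemma pathZ_nonneg (hw : ∀ y, 0 ≤ w y) (t : ℕ) (y : ℤ) : 0 ≤ pathZ w t y :=
  sum_nonneg fun _ _ => by split_ifs <;> first | exact prod_nonneg fun _ _ => hw _ | rfl

lemma pathZ_eq_zero_of_odd {t : ℕ} {y : ℤ} (h : Odd (t + y)) : pathZ w t y = 0 := by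
  induction t generalizing y with
  | zero => simp [pathZ_zero, show y ≠ 0 by rintro rfl; simp at h]
  | succ t ih =>
    rw [pathZ_succ, ih, ih, add_zero, mul_zero] <;> rw [Int.odd_iff] at h ⊢ <;> push_cast at h <;>
      omega

/-- Summing over two consecutive lengths removes the parity constraint of the walk. -/
noncomputable def pathZPair (t : ℕ) (y : ℤ) : ℝ := pathZ w t y + pathZ w (t + 1) y

lemma pathZPair_nonneg (hw : ∀ y, 0 ≤ w y) (t : ℕ) (y : ℤ) : 0 ≤ pathZPair w t y :=
  add_nonneg (pathZ_nonneg w hw t y) (pathZ_nonneg w hw (t + 1) y)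

lemma pathZPair_succ (t : ℕ) (y : ℤ) :
    pathZPair w (t + 1) y = w y * (pathZPair w t (y - 1) + pathZPair w t (y + 1)) := by
  rw [pathZPair, pathZ_succ w t y, pathZ_succ w (t + 1) y]
  unfold pathZPair
  ring

lemma one_le_pathZPair (hw : ∀ y, 1 ≤ w y) {t : ℕ} {y : ℤ} (hy : |y| ≤ t + 1) :
    1 ≤ pathZPair w t y := by
  have hw0 : ∀ y, 0 ≤ w y := fun y => zero_le_one.trans (hw y)
  rw [abs_le] at hy
  induction t generalizing y with
  | zero =>
    obtain rfl | rfl | rfl : y = -1 ∨ y = 0 ∨ y = 1 := by push_cast at hy; omega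
    all_goals simp [pathZPair, pathZ_succ, pathZ_zero, hw]
  | succ t ih =>
    have hF := pathZPair_nonneg w hw0 t
    have hnb : 1 ≤ pathZPair w t (y - 1) + pathZPair w t (y + 1) := by
      rcases le_total 0 y with h | h
      · linarith [ih (y := y - 1) (by push_cast at hy ⊢; omega), hF (y + 1)]
      · linarith [ih (y := y + 1) (by push_cast at hy ⊢; omega), hF (y - 1)]
    rw [pathZPair_succ]
    nlinarith [hw y]

lemma pow_mul_le_pathZPair (hw : ∀ y, 0 ≤ w y) {f : ℤ → ℝ} {μ M : ℝ} {T : ℕ} (hμ : 0 ≤ μ)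
    (hf : ∀ y, μ * f y ≤ w y * (f (y - 1) + f (y + 1)))
    (hbase : ∀ y, f y ≤ M * pathZPair w T y) (t : ℕ) (y : ℤ) :
    μ ^ t * f y ≤ M * pathZPair w (T + t) y := by
  induction t generalizing y with
  | zero => simpa using hbase y
  | succ t ih =>
    calc μ ^ (t + 1) * f y = μ ^ t * (μ * f y) := by ring
      _ ≤ μ ^ t * (w y * (f (y - 1) + f (y + 1))) :=
        mul_le_mul_of_nonneg_left (hf y) (pow_nonneg hμ t)
      _ = w y * (μ ^ t * f (y - 1) + μ ^ t * f (y + 1)) := by ring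
      _ ≤ w y * (M * pathZPair w (T + t) (y - 1) + M * pathZPair w (T + t) (y + 1)) :=
        mul_le_mul_of_nonneg_left (add_le_add (ih _) (ih _)) (hw y)
      _ = M * pathZPair w (T + (t + 1)) y := by rw [← add_assoc, pathZPair_succ]; ring

lemma pow_le_pathZ_two_mul (hw : ∀ y, 1 ≤ w y) {f : ℤ → ℝ} {μ : ℝ} {N n : ℕ} (hμ : 0 ≤ μ)
    (hf : ∀ y, μ * f y ≤ w y * (f (y - 1) + f (y + 1)))
    (hf0 : 0 < f 0) (hmax : ∀ y, f y ≤ f 0) (hsupp : ∀ y, (N : ℤ) < |y| → f y = 0)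
    (hn : N ≤ 2 * n) : μ ^ (2 * n - N) ≤ pathZ w (2 * n) 0 := by
  have hw0 : ∀ y, 0 ≤ w y := fun y => zero_le_one.trans (hw y)
  have hbase : ∀ y, f y ≤ f 0 * pathZPair w N y := by
    intro y
    rcases le_or_gt |y| N with hy | hy
    · exact (hmax y).trans (le_mul_of_one_le_right hf0.le (one_le_pathZPair w hw (by linarith)))
    · rw [hsupp y hy]
      exact mul_nonneg hf0.le (pathZPair_nonneg w hw0 N y)
  have hodd : pathZ w (2 * n + 1) 0 = 0 := pathZ_eq_zero_of_odd w (by simp)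
  have := pow_mul_le_pathZPair w hw0 hμ hf hbase (2 * n - N) 0
  rw [Nat.add_sub_cancel' hn, pathZPair, hodd, add_zero, mul_comm (f 0)] at this
  exact le_of_mul_le_mul_right this hf0

noncomputable def pinWeight (β : ℝ) (y : ℤ) : ℝ := if y = 0 then exp β else 1

lemma one_le_pinWeight {β : ℝ} (hβ : 0 ≤ β) (y : ℤ) : 1 ≤ pinWeight β y := by
  unfold pinWeight
  split_ifs
  exacts [one_le_exp hβ, le_rfl]

noncomputable def tent (r L : ℝ) (y : ℤ) : ℝ := r ^ y.natAbs * max 0 (L - y.natAbs)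

lemma tent_zero (r L : ℝ) (hL : 0 ≤ L) : tent r L 0 = L := by
  simp [tent, hL]

lemma tent_succ_le {r L μ : ℝ} (hr0 : 0 ≤ r) (hr1 : r ≤ 1) (hμr : μ * r ≤ 1 + r ^ 2) (k : ℕ) :
    μ * (r ^ (k + 1) * max 0 (L - (k + 1))) ≤
      r ^ k * max 0 (L - k) + r ^ (k + 2) * max 0 (L - (k + 2)) := by
  have hrk := pow_nonneg hr0 k
  rcases le_or_gt L (k + 1) with hk | hk
  · rw [max_eq_left (by linarith), mul_zero, mul_zero]
    positivity
  have hmid : r ^ k * (1 + r ^ 2) * (L - (k + 1)) ≤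
      r ^ k * (L - k) + r ^ (k + 2) * (L - (k + 2)) := by
    have : 0 ≤ r ^ k * (1 - r ^ 2) := mul_nonneg hrk (by nlinarith)
    rw [pow_add]
    nlinarith
  calc μ * (r ^ (k + 1) * max 0 (L - (k + 1))) = r ^ k * (μ * r) * (L - (k + 1)) := by
        rw [max_eq_right (by linarith), pow_succ]; ring
    _ ≤ r ^ k * (1 + r ^ 2) * (L - (k + 1)) := by gcongr
    _ ≤ r ^ k * (L - k) + r ^ (k + 2) * (L - (k + 2)) := hmid
    _ ≤ r ^ k * max 0 (L - k) + r ^ (k + 2) * max 0 (L - (k + 2)) := by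
        gcongr <;> exact le_max_right _ _

lemma tent_supersolution {β r L μ : ℝ} (hr0 : 0 ≤ r) (hr1 : r ≤ 1) (hL : 1 ≤ L)
    (hμr : μ * r ≤ 1 + r ^ 2) (hμL : μ * L ≤ 2 * exp β * r * (L - 1)) (y : ℤ) :
    μ * tent r L y ≤ pinWeight β y * (tent r L (y - 1) + tent r L (y + 1)) := by
  rcases eq_or_ne y 0 with rfl | hy
  · have hside : ∀ z : ℤ, z.natAbs = 1 → tent r L z = r * (L - 1) := fun z hz => by
      rw [tent, hz, pow_one, Nat.cast_one, max_eq_right (by linarith)]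
    rw [tent_zero r L (by linarith), hside (0 - 1) rfl, hside (0 + 1) rfl, pinWeight, if_pos rfl]
    linarith
  obtain ⟨k, hk⟩ : ∃ k, y.natAbs = k + 1 := ⟨y.natAbs - 1, by omega⟩
  have hsucc := tent_succ_le (L := L) hr0 hr1 hμr k
  have hpair : (y - 1).natAbs = k ∧ (y + 1).natAbs = k + 2 ∨
      (y - 1).natAbs = k + 2 ∧ (y + 1).natAbs = k := by omega
  rcases hpair with ⟨h1, h2⟩ | ⟨h1, h2⟩ <;>
  · simp only [tent, pinWeight, if_neg hy, one_mul, hk, h1, h2]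
    push_cast
    linarith

lemma tent_le_tent_zero {r L : ℝ} (hr0 : 0 ≤ r) (hr1 : r ≤ 1) (hL : 0 ≤ L) (y : ℤ) :
    tent r L y ≤ tent r L 0 := by
  rw [tent_zero r L hL, tent]
  have hmax : max 0 (L - y.natAbs) ≤ L := max_le hL (by linarith [y.natAbs.cast_nonneg (α := ℝ)])
  calc r ^ y.natAbs * max 0 (L - y.natAbs) ≤ 1 * L :=
        mul_le_mul (pow_le_one₀ hr0 hr1) hmax (le_max_left _ _) zero_le_one
    _ = L := one_mul L

lemma tent_eq_zero {r L : ℝ} {y : ℤ} (hy : L ≤ |y|) : tent r L y = 0 := by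
  rw [tent, max_eq_left, mul_zero]
  rwa [sub_nonpos, Nat.cast_natAbs]

lemma exists_supersolution_pinWeight {β : ℝ} (hβ : 0 < β) :
    ∃ μ > 2, ∃ f : ℤ → ℝ, 0 < f 0 ∧ (∀ y, f y ≤ f 0) ∧ (∃ N : ℕ, ∀ y, (N : ℤ) < |y| → f y = 0) ∧
      ∀ y, μ * f y ≤ pinWeight β y * (f (y - 1) + f (y + 1)) := by
  set q := exp β
  have hq : 1 < q := one_lt_exp_iff.2 hβ
  set r := q / (2 * q - 1)
  have hr0 : 0 < r := div_pos (by linarith) (by linarith)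
  have hr1 : r < 1 := (div_lt_one (by linarith)).2 (by linarith)
  have hrq : 1 + r ^ 2 ≤ 2 * q * r ^ 2 := by
    have : 0 < 2 * q - 1 := by linarith
    simp only [r, div_pow]
    rw [← sub_nonneg]
    field_simp
    nlinarith [mul_nonneg (sq_nonneg (q - 1)) this.le]
  -- `r = q / (2q - 1)` gives `2 q r ≥ l := r + 1/r > 2`, since `2 q r² - 1 - r²` reduces to
  -- `(q - 1)² (2q - 1) ≥ 0`; `L` is chosen so that `μ := (l + 2) / 2` satisfies `μ L = l (L - 1)`.
  set l := (1 + r ^ 2) / r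
  have hlr : l * r = 1 + r ^ 2 := div_mul_cancel₀ _ hr0.ne'
  have hl2 : 2 < l := (lt_div_iff₀ hr0).2 (by nlinarith)
  have hlq : l ≤ 2 * q * r := (div_le_iff₀ hr0).2 (by nlinarith)
  set L := 2 * l / (l - 2)
  have hL1 : 1 ≤ L := (le_div_iff₀ (by linarith)).2 (by linarith)
  refine ⟨(l + 2) / 2, by linarith, tent r L, by rw [tent_zero r L (by linarith)]; linarith,
    tent_le_tent_zero hr0.le hr1.le (by linarith),
    ⟨⌈L⌉₊, fun y hy => tent_eq_zero ?_⟩, tent_supersolution hr0.le hr1.le hL1 ?_ ?_⟩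
  · calc L ≤ ⌈L⌉₊ := Nat.le_ceil L
      _ ≤ |y| := by exact_mod_cast hy.le
  · nlinarith
  · have hμL : (l + 2) / 2 * L = l * (L - 1) := by
      simp only [L]
      field_simp [show l - 2 ≠ 0 by linarith]
      ring
    rw [hμL]
    exact mul_le_mul_of_nonneg_right hlq (by linarith)

lemma prod_pinWeight (β : ℝ) (s : Finset ℕ) (φ : ℕ → ℤ) :
    ∏ x ∈ s, pinWeight β (φ x) = exp (β * #(s.filter (φ · = 0))) := by
  simp only [pinWeight]
  rw [prod_ite, prod_const, prod_const_one, mul_one, ← exp_nat_mul, mul_comm]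

lemma pathZ_pinWeight_two_mul (β : ℝ) {n : ℕ} (hn : 0 < n) :
    pathZ (pinWeight β) (2 * n) 0 = exp β * ∑ s ∈ tiedPaths n, exp (β * numZeros n s) := by
  have hIcc : Icc 1 (2 * n) = insert (2 * n) (Icc 1 (2 * n - 1)) := by
    ext x; simp only [mem_Icc, mem_insert]; omega
  rw [pathZ, tiedPaths, sum_filter, mul_sum]
  refine sum_congr rfl fun s _ => ?_
  split_ifs with h
  · rw [hIcc, prod_insert (by simp; omega), h, prod_pinWeight, numZeros, pinWeight, if_pos rfl]
  · rw [mul_zero]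

lemma card_tiedPaths_le (n : ℕ) : ((tiedPaths n).card : ℝ) ≤ 4 ^ n := by
  have : (tiedPaths n).card ≤ 4 ^ n := by
    calc (tiedPaths n).card ≤ (univ : Finset (Fin (2 * n) → Bool)).card := card_filter_le _ _
      _ = 4 ^ n := by simp [pow_mul]
  exact_mod_cast this

lemma pathZ_le_pinnedZ (β : ℝ) {n : ℕ} (hn : 0 < n) :
    exp (-β) * pathZ (pinWeight β) (2 * n) 0 / 4 ^ n ≤ pinnedZ n β := by
  rw [pathZ_pinWeight_two_mul β hn, ← mul_assoc, ← exp_add, neg_add_cancel, exp_zero, one_mul,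
    pinnedZ]
  rcases (tiedPaths n).eq_empty_or_nonempty with h | h
  · simp [h]
  · exact div_le_div_of_nonneg_left (sum_nonneg fun _ _ => (exp_pos _).le)
      (by exact_mod_cast h.card_pos) (card_tiedPaths_le n)

lemma pinnedZ_le_exp {β : ℝ} (hβ : 0 ≤ β) (n : ℕ) : pinnedZ n β ≤ exp (2 * β * n) := by
  have hterm : ∀ s, exp (β * numZeros n s) ≤ exp (2 * β * n) := by
    intro s
    have : (numZeros n s : ℝ) ≤ 2 * n := by
      have : numZeros n s ≤ 2 * n :=
        (card_filter_le _ _).trans (by simp only [Nat.card_Icc]; omega)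
      exact_mod_cast this
    exact exp_le_exp.2 (by nlinarith)
  rw [pinnedZ]
  refine div_le_of_le_mul₀ (Nat.cast_nonneg _) (exp_pos _).le ?_
  calc ∑ s ∈ tiedPaths n, exp (β * numZeros n s) ≤ #(tiedPaths n) • exp (2 * β * n) :=
        sum_le_card_nsmul _ _ _ fun s _ => hterm s
    _ = exp (2 * β * n) * #(tiedPaths n) := by rw [nsmul_eq_mul, mul_comm]

lemma exists_pinnedZ_ge {β : ℝ} (hβ : 0 < β) :
    ∃ c > 0, ∃ a > 1, ∀ᶠ n in atTop, c * a ^ n ≤ pinnedZ n β := by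
  obtain ⟨μ, hμ, f, hf0, hmax, ⟨N, hsupp⟩, hf⟩ := exists_supersolution_pinWeight hβ
  have hμ0 : 0 < μ := by linarith
  refine ⟨exp (-β) / μ ^ N, by positivity, μ ^ 2 / 4, by nlinarith, ?_⟩
  filter_upwards [eventually_ge_atTop (max 1 N)] with n hn
  have hn1 : 0 < n := by omega
  have hnN : N ≤ 2 * n := by omega
  calc exp (-β) / μ ^ N * (μ ^ 2 / 4) ^ n = exp (-β) * μ ^ (2 * n - N) / 4 ^ n := by
        rw [pow_sub₀ μ hμ0.ne' hnN, div_pow, ← pow_mul]; ring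
    _ ≤ exp (-β) * pathZ (pinWeight β) (2 * n) 0 / 4 ^ n := by
        gcongr
        exact pow_le_pathZ_two_mul _ (one_le_pinWeight hβ.le) hμ0.le hf hf0 hmax hsupp hnN
    _ ≤ pinnedZ n β := pathZ_le_pinnedZ β hn1

lemma liminf_log_div_pos {u : ℕ → ℝ} {c a K : ℝ} (hc : 0 < c) (ha : 1 < a)
    (hlow : ∀ᶠ n in atTop, c * a ^ n ≤ u n) (hup : ∀ n, u n ≤ exp (K * n)) :
    0 < liminf (fun n => log (u n) / n) atTop := by
  have hbounds : ∀ᶠ n : ℕ in atTop,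
      log c / n + log a ≤ log (u n) / n ∧ log (u n) / n ≤ K := by
    filter_upwards [hlow, eventually_gt_atTop 0] with n hn hn0
    have hn0' : (0 : ℝ) < n := by exact_mod_cast hn0
    have hpos : 0 < c * a ^ n := by positivity
    have hlog : log c + n * log a ≤ log (u n) := by
      rw [← log_pow, ← log_mul hc.ne' (by positivity)]
      exact log_le_log hpos hn
    constructor
    · rw [le_div_iff₀ hn0', add_mul, div_mul_cancel₀ _ hn0'.ne']
      linarith
    · rw [div_le_iff₀ hn0', ← log_exp (K * n)]
      exact log_le_log (hpos.trans_le hn) (hup n)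
  have htend : Tendsto (fun n : ℕ => log c / n + log a) atTop (nhds (log a)) := by
    simpa using (tendsto_const_div_atTop_nhds_zero_nat (log c)).add_const (log a)
  have hlog_a := log_pos ha
  have hev : ∀ᶠ n : ℕ in atTop, log a / 2 ≤ log (u n) / n := by
    filter_upwards [htend.eventually (lt_mem_nhds (half_lt_self hlog_a)), hbounds]
      with n hn hb
    exact hn.le.trans hb.1
  have hcob : IsCoboundedUnder (· ≥ ·) atTop (fun n : ℕ => log (u n) / n) :=
    isCoboundedUnder_ge_of_eventually_le atTop (hbounds.mono fun _ hb => hb.2)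
  exact (half_pos hlog_a).trans_le (le_liminf_of_le hcob hev)

/-- for every `β > 0` the pinned partition function grows exponentially:
`liminf (1/n) log Ẑ_{n,β} > 0`. -/
theorem stmt17 (β : ℝ) (hβ : 0 < β) :
    0 < atTop.liminf (fun n : ℕ => Real.log (pinnedZ n β) / n) := by
  obtain ⟨c, hc, a, ha, hlow⟩ := exists_pinnedZ_ge hβ
  exact liminf_log_div_pos hc ha hlow (pinnedZ_le_exp hβ.le)
end PathPartition
end
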